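/- arXiv:1707.03531 — 10 statements merged into one kernel-verified Lean document; each statement's English description precedes it below -/
import Mathlib

section
/- In any model of QT (axioms QT1–QT5), the successor operation defined by Sx = b if x = a, and Sx = x*b otherwise, satisfies: Sx = Sy implies x = y. -/
/-- In any model of QT (axioms QT1–QT5), the successor operation
defined by Sx = b if x = a and Sx = x*b otherwise is injective. -/
theorem stmt_0 (M : Type*) (op : M → M → M) (a b : M)
    (qt1 : ∀ x y z, op (op x y) z = op x (op y z))
    (qt2 : ∀ x y, op x y ≠ a ∧ op x y ≠ b)
    (qt3 : ∀ x y, (op x a = op y a → x = y) ∧ (op x b = op y b → x = y) ∧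
      (op a x = op a y → x = y) ∧ (op b x = op b y → x = y))
    (qt4 : ∀ x y, op a x ≠ op b y ∧ op x a ≠ op y b)
    (qt5 : ∀ x, x = a ∨ x = b ∨
      ((∃ y, op a y = x ∨ op b y = x) ∧ (∃ z, op z a = x ∨ op z b = x)))
    (S : M → M) (hS : S a = b ∧ ∀ x, x ≠ a → S x = op x b) :
    ∀ x y, S x = S y → x = y := by
  obtain ⟨hSa, hSn⟩ := hS
  intro x y h
  by_cases hx : x = a <;> by_cases hy : y = a
  · rw [hx, hy]
  · rw [hx, hSa, hSn y hy] at h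
    exact absurd h.symm (qt2 y b).2
  · rw [hy, hSa, hSn x hx] at h
    exact absurd h (qt2 x b).2
  · rw [hSn x hx, hSn y hy] at h
    exact (qt3 x y).2.1 h
end

section
/- In any model of QT, defining xRy as (x = a and y ≠ a) or ∃z x*z = y, the relation R is transitive: xRy and yRz imply xRz. -/
/-- R defined by xRy ≡ (x = a ∧ y ≠ a) ∨ ∃z x*z = y is transitive. -/
theorem stmt_1 (M : Type*) (op : M → M → M) (a b : M)
    (qt1 : ∀ x y z, op (op x y) z = op x (op y z))
    (qt2 : ∀ x y, op x y ≠ a ∧ op x y ≠ b)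
    (qt3 : ∀ x y, (op x a = op y a → x = y) ∧ (op x b = op y b → x = y) ∧
      (op a x = op a y → x = y) ∧ (op b x = op b y → x = y))
    (qt4 : ∀ x y, op a x ≠ op b y ∧ op x a ≠ op y b)
    (qt5 : ∀ x, x = a ∨ x = b ∨
      ((∃ y, op a y = x ∨ op b y = x) ∧ (∃ z, op z a = x ∨ op z b = x)))
    (R : M → M → Prop) (hR : ∀ x y, R x y ↔ (x = a ∧ y ≠ a) ∨ ∃ z, op x z = y) :
    ∀ x y z, R x y → R y z → R x z := by
  intro x y z hxy hyz
  rw [hR] at hxy hyz ⊢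
  rcases hxy with ⟨hx, hy⟩ | ⟨u, hu⟩
  · rcases hyz with ⟨hy', _⟩ | ⟨w, hw⟩
    · exact absurd hy' hy
    · exact Or.inl ⟨hx, hw ▸ (qt2 y w).1⟩
  · rcases hyz with ⟨hy', _⟩ | ⟨w, hw⟩
    · exact absurd (hu ▸ hy') (qt2 x u).1
    · exact Or.inr ⟨op u w, by rw [← qt1, hu, hw]⟩
end

section
/- In any model of QT, for all x and y: x R (Sy) if and only if x R y or x = y, where S is the string successor (Sx = b if x = a, else Sx = x*b). -/
/-- x R (Sy) iff x R y or x = y. -/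
theorem stmt_3 (M : Type*) (op : M → M → M) (a b : M)
    (qt1 : ∀ x y z, op (op x y) z = op x (op y z))
    (qt2 : ∀ x y, op x y ≠ a ∧ op x y ≠ b)
    (qt3 : ∀ x y, (op x a = op y a → x = y) ∧ (op x b = op y b → x = y) ∧
      (op a x = op a y → x = y) ∧ (op b x = op b y → x = y))
    (qt4 : ∀ x y, op a x ≠ op b y ∧ op x a ≠ op y b)
    (qt5 : ∀ x, x = a ∨ x = b ∨
      ((∃ y, op a y = x ∨ op b y = x) ∧ (∃ z, op z a = x ∨ op z b = x)))
    (R : M → M → Prop) (hR : ∀ x y, R x y ↔ (x = a ∧ y ≠ a) ∨ ∃ z, op x z = y)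
    (S : M → M) (hS : S a = b ∧ ∀ x, x ≠ a → S x = op x b) :
    ∀ x y, R x (S y) ↔ R x y ∨ x = y := by
  obtain ⟨hSa, hSx⟩ := hS
  have hab : a ≠ b := fun h => (qt4 a a).1 (by rw [h])
  intro x y
  by_cases hy : y = a
  · subst hy
    rw [hSa, hR, hR]
    constructor
    · rintro (⟨hx, -⟩ | ⟨z, hz⟩)
      · exact Or.inr hx
      · exact absurd hz (qt2 x z).2
    · rintro ((⟨-, h⟩ | ⟨z, hz⟩) | rfl)
      · exact absurd rfl h
      · exact absurd hz (qt2 x z).1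
      · exact Or.inl ⟨rfl, Ne.symm hab⟩
  · rw [hSx y hy, hR, hR]
    constructor
    · rintro (⟨rfl, -⟩ | ⟨z, hz⟩)
      · exact Or.inl (Or.inl ⟨rfl, hy⟩)
      · rcases qt5 z with rfl | rfl | ⟨-, w, rfl | rfl⟩
        · exact absurd hz (qt4 x y).2
        · exact Or.inr ((qt3 x y).2.1 hz)
        · rw [← qt1] at hz
          exact absurd hz (qt4 (op x w) y).2
        · rw [← qt1] at hz
          exact Or.inl (Or.inr ⟨w, (qt3 (op x w) y).2.1 hz⟩)
    · rintro ((⟨rfl, -⟩ | ⟨z, rfl⟩) | rfl)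
      · exact Or.inl ⟨rfl, (qt2 y b).1⟩
      · exact Or.inr ⟨op z b, (qt1 x z b).symm⟩
      · exact Or.inr ⟨b, rfl⟩
end

section
/- In any model of QT, the tractability predicate I₀(y) ≡ ∀x (xRy ∨ x = y → ¬xRx) holds of both atoms a and b, and satisfies: if I₀(x) then ¬xRx. -/
/-- tractability I₀ holds of a and b, and I₀(x) → ¬xRx. -/
theorem stmt_4 (M : Type*) (op : M → M → M) (a b : M)
    (qt1 : ∀ x y z, op (op x y) z = op x (op y z))
    (qt2 : ∀ x y, op x y ≠ a ∧ op x y ≠ b)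
    (qt3 : ∀ x y, (op x a = op y a → x = y) ∧ (op x b = op y b → x = y) ∧
      (op a x = op a y → x = y) ∧ (op b x = op b y → x = y))
    (qt4 : ∀ x y, op a x ≠ op b y ∧ op x a ≠ op y b)
    (qt5 : ∀ x, x = a ∨ x = b ∨
      ((∃ y, op a y = x ∨ op b y = x) ∧ (∃ z, op z a = x ∨ op z b = x)))
    (R : M → M → Prop) (hR : ∀ x y, R x y ↔ (x = a ∧ y ≠ a) ∨ ∃ z, op x z = y)
    (I0 : M → Prop) (hI0 : ∀ y, I0 y ↔ ∀ x, (R x y ∨ x = y) → ¬ R x x) :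
    I0 a ∧ I0 b ∧ ∀ x, I0 x → ¬ R x x := by
  refine ⟨?_, ?_, ?_⟩
  · rw [hI0]
    intro x hx hxx
    rcases hx with hxa | rfl
    · rw [hR] at hxa
      rcases hxa with ⟨_, h⟩ | ⟨z, hz⟩
      · exact h rfl
      · exact (qt2 x z).1 hz
    · rw [hR] at hxx
      rcases hxx with ⟨_, h⟩ | ⟨z, hz⟩
      · exact h rfl
      · exact (qt2 x z).1 hz
  · rw [hI0]
    intro x hx hxx
    have hxb : x = b := by
      rcases hx with hxb | rfl
      · rw [hR] at hxb
        rcases hxb with ⟨hxa, _⟩ | ⟨z, hz⟩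
        · rw [hR, hxa] at hxx
          rcases hxx with ⟨_, h⟩ | ⟨z, hz⟩
          · exact absurd rfl h
          · exact absurd hz (qt2 a z).1
        · exact absurd hz (qt2 x z).2
      · rfl
    rw [hR, hxb] at hxx
    rcases hxx with ⟨hba, h⟩ | ⟨z, hz⟩
    · exact h hba
    · exact (qt2 b z).2 hz
  · intro x hx
    exact (hI0 x).mp hx x (Or.inr rfl)
end

section
/- In any model of QT, the tractable elements are closed under the successor operations: if I₀(x) then I₀(Sx) and I₀(x*a), where Sx = b if x = a and Sx = x*b otherwise. -/
/-- tractable elements are closed under both successor operations. -/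
theorem stmt_6 (M : Type*) (op : M → M → M) (a b : M)
    (qt1 : ∀ x y z, op (op x y) z = op x (op y z))
    (qt2 : ∀ x y, op x y ≠ a ∧ op x y ≠ b)
    (qt3 : ∀ x y, (op x a = op y a → x = y) ∧ (op x b = op y b → x = y) ∧
      (op a x = op a y → x = y) ∧ (op b x = op b y → x = y))
    (qt4 : ∀ x y, op a x ≠ op b y ∧ op x a ≠ op y b)
    (qt5 : ∀ x, x = a ∨ x = b ∨
      ((∃ y, op a y = x ∨ op b y = x) ∧ (∃ z, op z a = x ∨ op z b = x)))
    (R : M → M → Prop) (hR : ∀ x y, R x y ↔ (x = a ∧ y ≠ a) ∨ ∃ z, op x z = y)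
    (I0 : M → Prop) (hI0 : ∀ y, I0 y ↔ ∀ x, (R x y ∨ x = y) → ¬ R x x)
    (S : M → M) (hS : S a = b ∧ ∀ x, x ≠ a → S x = op x b) :
    ∀ x, I0 x → I0 (S x) ∧ I0 (op x a) := by
  -- key: if c is an atom and w R (x * c) then w = x or w R x
  have key : ∀ c, (c = a ∨ c = b) → ∀ w x, R w (op x c) → w = x ∨ R w x := by
    intro c hc w x hw
    rcases (hR w (op x c)).1 hw with ⟨hwa, _⟩ | ⟨z, hz⟩
    · by_cases hx : x = a
      · exact Or.inl (hwa.trans hx.symm)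
      · exact Or.inr ((hR w x).2 (Or.inl ⟨hwa, hx⟩))
    · -- op w z = op x c
      rcases qt5 z with hz1 | hz1 | ⟨_, ⟨z', hz'⟩⟩
      · rw [hz1] at hz
        rcases hc with hc | hc
        · rw [hc] at hz; exact Or.inl ((qt3 w x).1 hz)
        · rw [hc] at hz; exact absurd hz (qt4 w x).2
      · rw [hz1] at hz
        rcases hc with hc | hc
        · rw [hc] at hz; exact absurd hz.symm (qt4 x w).2
        · rw [hc] at hz; exact Or.inl ((qt3 w x).2.1 hz)
      · rcases hz' with hz' | hz'
        · rw [← hz', ← qt1] at hz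
          rcases hc with hc | hc
          · rw [hc] at hz
            exact Or.inr ((hR w x).2 (Or.inr ⟨z', (qt3 _ _).1 hz⟩))
          · rw [hc] at hz; exact absurd hz (qt4 (op w z') x).2
        · rw [← hz', ← qt1] at hz
          rcases hc with hc | hc
          · rw [hc] at hz; exact absurd hz.symm (qt4 x (op w z')).2
          · rw [hc] at hz
            exact Or.inr ((hR w x).2 (Or.inr ⟨z', (qt3 _ _).2.1 hz⟩))
  -- I0 is preserved by appending an atom
  have step : ∀ c, (c = a ∨ c = b) → ∀ x, I0 x → I0 (op x c) := by
    intro c hc x hx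
    rw [hI0]
    intro w hw hww
    have hIx := (hI0 x).1 hx
    rcases hw with hw | hw
    · rcases key c hc w x hw with h | h
      · exact hIx w (Or.inr h) hww
      · exact hIx w (Or.inl h) hww
    · rw [hw] at hww
      rcases key c hc (op x c) x hww with h | h
      · rw [h] at hww; exact hIx x (Or.inr rfl) hww
      · exact hIx (op x c) (Or.inl h) hww
  -- I0 b holds unconditionally
  have hI0b : I0 b := by
    rw [hI0]
    intro w hw hww
    rcases (hR w w).1 hww with ⟨hwa, hwa'⟩ | ⟨z, hz⟩
    · exact hwa' hwa
    · rcases hw with hw | hw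
      · rcases (hR w b).1 hw with ⟨hwa, _⟩ | ⟨z', hz'⟩
        · rw [hwa] at hz; exact (qt2 a z).1 hz
        · exact (qt2 w z').2 hz'
      · rw [hw] at hz; exact (qt2 b z).2 hz
  intro x hx
  constructor
  · by_cases hxa : x = a
    · rw [hxa, hS.1]; exact hI0b
    · rw [hS.2 x hxa]
      exact step b (Or.inr rfl) x hx
  · exact step a (Or.inl rfl) x hx
end

section
/- In any model of QT, for any predicate I on the domain, the predicate J(z) ≡ I(z) ∧ ∀x∀y (I(x) ∧ I(y) ∧ x*z = y*z → x = y) satisfies: J(a), J(b), and J is closed under z ↦ z*a and z ↦ z*b; moreover all J-elements are right-cancellable among I-elements. -/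
/-- for any predicate I (a string concept: holding of a, b and
closed under the successor operations z*a, z*b), the strengthening
J(z) ≡ I(z) ∧ ∀x∀y (I(x) ∧ I(y) ∧ x*z = y*z → x = y) satisfies J(a), J(b),
J is closed under z ↦ z*a and z ↦ z*b, and all J-elements are
right-cancellable among I-elements. -/
theorem stmt_7 (M : Type*) (op : M → M → M) (a b : M)
    (qt1 : ∀ x y z, op (op x y) z = op x (op y z))
    (qt2 : ∀ x y, op x y ≠ a ∧ op x y ≠ b)
    (qt3 : ∀ x y, (op x a = op y a → x = y) ∧ (op x b = op y b → x = y) ∧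
      (op a x = op a y → x = y) ∧ (op b x = op b y → x = y))
    (qt4 : ∀ x y, op a x ≠ op b y ∧ op x a ≠ op y b)
    (qt5 : ∀ x, x = a ∨ x = b ∨
      ((∃ y, op a y = x ∨ op b y = x) ∧ (∃ z, op z a = x ∨ op z b = x)))
    (I : M → Prop) (hIa : I a) (hIb : I b)
    (hIca : ∀ z, I z → I (op z a)) (hIcb : ∀ z, I z → I (op z b))
    (J : M → Prop)
    (hJ : ∀ z, J z ↔ I z ∧ ∀ x y, I x → I y → op x z = op y z → x = y) :
    J a ∧ J b ∧ (∀ z, J z → J (op z a)) ∧ (∀ z, J z → J (op z b)) ∧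
      (∀ z, J z → ∀ x y, I x → I y → op x z = op y z → x = y) := by
  refine ⟨?_, ?_, ?_, ?_, fun z hz => ((hJ z).mp hz).2⟩
  · exact (hJ a).mpr ⟨hIa, fun x y _ _ h => (qt3 x y).1 h⟩
  · exact (hJ b).mpr ⟨hIb, fun x y _ _ h => (qt3 x y).2.1 h⟩
  · intro z hz
    obtain ⟨hIz, hc⟩ := (hJ z).mp hz
    exact (hJ _).mpr ⟨hIca z hIz, fun x y hx hy h => by
      rw [← qt1, ← qt1] at h
      exact hc x y hx hy ((qt3 _ _).1 h)⟩
  · intro z hz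
    obtain ⟨hIz, hc⟩ := (hJ z).mp hz
    exact (hJ _).mpr ⟨hIcb z hIz, fun x y hx hy h => by
      rw [← qt1, ← qt1] at h
      exact hc x y hx hy ((qt3 _ _).2.1 h)⟩
end

section
/- In any model of QT, if J is a string concept contained in I₀, then J≤(x) ≡ ∀y (y ≤ x → J(y)) is a string concept that is downward closed under ≤, where y ≤ x means (I₀(y) ∧ I₀(x) ∧ yRx) or y = x. -/
/-- if J is a string concept contained in I₀ then
J≤(x) ≡ ∀y (y ≤ x → J(y)) is a string concept downward closed under ≤. -/
theorem stmt_9 (M : Type*) (op : M → M → M) (a b : M)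
    (qt1 : ∀ x y z, op (op x y) z = op x (op y z))
    (qt2 : ∀ x y, op x y ≠ a ∧ op x y ≠ b)
    (qt3 : ∀ x y, (op x a = op y a → x = y) ∧ (op x b = op y b → x = y) ∧
      (op a x = op a y → x = y) ∧ (op b x = op b y → x = y))
    (qt4 : ∀ x y, op a x ≠ op b y ∧ op x a ≠ op y b)
    (qt5 : ∀ x, x = a ∨ x = b ∨
      ((∃ y, op a y = x ∨ op b y = x) ∧ (∃ z, op z a = x ∨ op z b = x)))
    (R : M → M → Prop) (hR : ∀ x y, R x y ↔ (x = a ∧ y ≠ a) ∨ ∃ z, op x z = y)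
    (I0 : M → Prop) (hI0 : ∀ y, I0 y ↔ ∀ x, (R x y ∨ x = y) → ¬ R x x)
    (le : M → M → Prop) (hle : ∀ y x, le y x ↔ (I0 y ∧ I0 x ∧ R y x) ∨ y = x)
    (S : M → M) (hS : S a = b ∧ ∀ x, x ≠ a → S x = op x b)
    (J : M → Prop) (hJa : J a) (hJb : J b)
    (hJS : ∀ x, J x → J (S x)) (hJSa : ∀ x, J x → J (op x a))
    (hJI0 : ∀ x, J x → I0 x)
    (Jle : M → Prop) (hJle : ∀ x, Jle x ↔ ∀ y, le y x → J y) :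
    Jle a ∧ Jle b ∧ (∀ x, Jle x → Jle (S x)) ∧ (∀ x, Jle x → Jle (op x a)) ∧
      (∀ x y, Jle x → le y x → Jle y) := by
  -- R is transitive
  have Rtrans : ∀ u x y, R u x → R x y → R u y := by
    intro u x y hux hxy
    rw [hR] at hux hxy ⊢
    rcases hux with ⟨rfl, hxa⟩ | ⟨w, hw⟩
    · rcases hxy with ⟨rfl, hya⟩ | ⟨v, hv⟩
      · exact absurd rfl hxa
      · exact Or.inl ⟨rfl, fun h => (qt2 x v).1 (hv.trans h)⟩
    · rcases hxy with ⟨rfl, hya⟩ | ⟨v, hv⟩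
      · exact absurd hw (qt2 u w).1
      · exact Or.inr ⟨op w v, by rw [← qt1, hw, hv]⟩
  -- I0 is downward closed under R / equality
  have I0down : ∀ x y, I0 y → (R x y ∨ x = y) → I0 x := by
    intro x y hy hxy
    rw [hI0] at hy ⊢
    intro u hu
    rcases hxy with hxy | rfl
    · rcases hu with hu | rfl
      · exact hy u (Or.inl (Rtrans u x y hu hxy))
      · exact hy u (Or.inl hxy)
    · exact hy u hu
  -- editing lemma for b
  have editB : ∀ x y z, op y z = op x b → y = x ∨ ∃ w, op y w = x := by
    intro x y z h
    rcases qt5 z with rfl | rfl | ⟨_, ⟨w, hw | hw⟩⟩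
    · exact absurd h (qt4 y x).2
    · exact Or.inl ((qt3 y x).2.1 h)
    · exact absurd (by rw [qt1, hw]; exact h : op (op y w) a = op x b)
        (qt4 (op y w) x).2
    · exact Or.inr ⟨w, (qt3 (op y w) x).2.1 (by rw [qt1, hw]; exact h)⟩
  -- editing lemma for a
  have editA : ∀ x y z, op y z = op x a → y = x ∨ ∃ w, op y w = x := by
    intro x y z h
    rcases qt5 z with rfl | rfl | ⟨_, ⟨w, hw | hw⟩⟩
    · exact Or.inl ((qt3 y x).1 h)
    · exact absurd h.symm (qt4 x y).2
    · exact Or.inr ⟨w, (qt3 (op y w) x).1 (by rw [qt1, hw]; exact h)⟩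
    · exact absurd (by rw [qt1, hw]; exact h : op (op y w) b = op x a).symm
        (qt4 x (op y w)).2
  have selfle : ∀ x, le x x := fun x => (hle x x).2 (Or.inr rfl)
  have Jself : ∀ x, Jle x → J x := fun x hx => (hJle x).1 hx x (selfle x)
  refine ⟨?_, ?_, ?_, ?_, ?_⟩
  · -- Jle a
    rw [hJle]
    intro y hy
    rcases (hle y a).1 hy with ⟨_, _, hRy⟩ | rfl
    · rcases (hR y a).1 hRy with ⟨rfl, h⟩ | ⟨z, hz⟩
      · exact hJa
      · exact absurd hz (qt2 y z).1
    · exact hJa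
  · -- Jle b
    rw [hJle]
    intro y hy
    rcases (hle y b).1 hy with ⟨_, _, hRy⟩ | rfl
    · rcases (hR y b).1 hRy with ⟨rfl, h⟩ | ⟨z, hz⟩
      · exact hJa
      · exact absurd hz (qt2 y z).2
    · exact hJb
  · -- closure under S
    intro x hx
    rw [hJle]
    intro y hy
    rcases (hle y (S x)).1 hy with ⟨hIy, hISx, hRy⟩ | rfl
    · rcases (hR y (S x)).1 hRy with ⟨rfl, _⟩ | ⟨z, hz⟩
      · exact hJa
      · by_cases hxa : x = a
        · subst hxa
          rw [hS.1] at hz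
          exact absurd hz (qt2 y z).2
        · rw [hS.2 x hxa] at hz
          rcases editB x y z hz with rfl | ⟨w, hw⟩
          · exact Jself y hx
          · have hRxSx : R x (S x) := (hR x (S x)).2 (Or.inr ⟨b, (hS.2 x hxa).symm⟩)
            have hI0x : I0 x := I0down x (S x) hISx (Or.inl hRxSx)
            exact (hJle x).1 hx y ((hle y x).2 (Or.inl ⟨hIy, hI0x,
              (hR y x).2 (Or.inr ⟨w, hw⟩)⟩))
    · exact hJS x (Jself x hx)
  · -- closure under · a
    intro x hx
    rw [hJle]
    intro y hy
    rcases (hle y (op x a)).1 hy with ⟨hIy, hIxa, hRy⟩ | rfl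
    · rcases (hR y (op x a)).1 hRy with ⟨rfl, _⟩ | ⟨z, hz⟩
      · exact hJa
      · rcases editA x y z hz with rfl | ⟨w, hw⟩
        · exact Jself y hx
        · have hRx : R x (op x a) := (hR x (op x a)).2 (Or.inr ⟨a, rfl⟩)
          have hI0x : I0 x := I0down x (op x a) hIxa (Or.inl hRx)
          exact (hJle x).1 hx y ((hle y x).2 (Or.inl ⟨hIy, hI0x,
            (hR y x).2 (Or.inr ⟨w, hw⟩)⟩))
    · exact hJSa x (Jself x hx)
  · -- downward closure
    intro x y hx hyx
    rw [hJle]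
    intro u hu
    rcases (hle y x).1 hyx with ⟨hIy, hIx, hRyx⟩ | rfl
    · rcases (hle u y).1 hu with ⟨hIu, _, hRuy⟩ | rfl
      · exact (hJle x).1 hx u ((hle u x).2 (Or.inl ⟨hIu, hIx, Rtrans u y x hRuy hRyx⟩))
      · exact (hJle x).1 hx u hyx
    · exact (hJle y).1 hx u hu
end

section
/- QT does not prove ∀x ¬(x B x): there exists a model of QT1–QT5 containing an element X with X * X = X (so X is a proper 'initial segment' of itself). -/
/-!
Besides the finite nonempty words over an alphabet, admit transfinite words consisting of an
`ω`-sequence followed by an `ω*`-sequence, and forget everything strictly between these two ends.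
Concatenation is still associative, left and right multiplication by a letter are still injective
with disjoint images for distinct letters, and every non-letter still has a first and a last
letter, which are exactly the axioms QT1–QT5. But the product of two transfinite words only keeps
the left end of the first factor and the right end of the second, so each of them is idempotent.
-/

/-- `word u` is a finite nonempty word; `gap l r` is the word `l 0, l 1, l 2, … … r 2, r 1, r 0`
of order type `ω + ω*`, whose middle is forgotten. -/
inductive QTModel (α : Type*)
  | word : FreeSemigroup α → QTModel α
  | gap : Stream' α → Stream' α → QTModel α

namespace QTModel

variable {α : Type*}

instance : Mul (QTModel α) where
  mul
  | word u, word v => word (u * v)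
  | word ⟨c, w⟩, gap l r => gap ((c :: w) ++ₛ l) r
  | gap l r, word ⟨c, w⟩ => gap l ((c :: w).reverse ++ₛ r)
  | gap l _, gap _ r => gap l r

@[simp] theorem word_mul_word (u v : FreeSemigroup α) : word u * word v = word (u * v) := rfl
@[simp] theorem word_mul_gap (c : α) (w : List α) (l r : Stream' α) :
    word ⟨c, w⟩ * gap l r = gap (c :: w ++ₛ l) r := rfl
@[simp] theorem gap_mul_word (c : α) (w : List α) (l r : Stream' α) :
    gap l r * word ⟨c, w⟩ = gap l ((c :: w).reverse ++ₛ r) := rfl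
@[simp] theorem gap_mul_gap (l r l' r' : Stream' α) : gap l r * gap l' r' = gap l r' := rfl

instance : Semigroup (QTModel α) where
  mul_assoc x y z := by
    rcases x with ⟨⟨_, _⟩⟩ | ⟨_, _⟩ <;> rcases y with ⟨⟨_, _⟩⟩ | ⟨_, _⟩ <;>
      rcases z with ⟨⟨_, _⟩⟩ | ⟨_, _⟩ <;>
      simp [Stream'.cons_append_stream]

def letter (c : α) : QTModel α := word ⟨c, []⟩

theorem mul_ne_letter (x y : QTModel α) (c : α) : x * y ≠ letter c := by
  rcases x with ⟨⟨_, _⟩⟩ | ⟨_, _⟩ <;> rcases y with ⟨⟨_, _⟩⟩ | ⟨_, _⟩ <;> simp [letter]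

theorem letter_mul_inj {c d : α} {x y : QTModel α} :
    letter c * x = letter d * y ↔ c = d ∧ x = y := by
  rcases x with ⟨⟨_, _⟩⟩ | ⟨_, _⟩ <;> rcases y with ⟨⟨_, _⟩⟩ | ⟨_, _⟩ <;>
    simp [letter, Stream'.cons_append_stream, Stream'.cons_injective2.eq_iff, and_assoc]

theorem mul_letter_inj {c d : α} {x y : QTModel α} :
    x * letter c = y * letter d ↔ c = d ∧ x = y := by
  rcases x with ⟨⟨_, _⟩⟩ | ⟨_, _⟩ <;> rcases y with ⟨⟨_, _⟩⟩ | ⟨_, _⟩ <;>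
    simp [letter, Stream'.cons_injective2.eq_iff, and_left_comm, and_comm]

theorem exists_letter_mul_eq {x : QTModel α} (hx : ∀ c, x ≠ letter c) :
    ∃ c y, letter c * y = x := by
  rcases x with ⟨c, _ | ⟨d, w⟩⟩ | ⟨l, r⟩
  · exact absurd rfl (hx c)
  · exact ⟨c, word ⟨d, w⟩, rfl⟩
  · exact ⟨l.head, gap l.tail r, by simp [letter]⟩

theorem exists_mul_letter_eq {x : QTModel α} (hx : ∀ c, x ≠ letter c) :
    ∃ y c, y * letter c = x := by
  rcases x with ⟨c, w⟩ | ⟨l, r⟩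
  · rcases w.eq_nil_or_concat with rfl | ⟨w, d, rfl⟩
    · exact absurd rfl (hx c)
    · exact ⟨word ⟨c, w⟩, d, by simp [letter]⟩
  · exact ⟨gap l r.tail, r.head, by simp [letter]⟩

end QTModel

/-- QT does not prove ∀x ¬(x B x): there is a model of QT1–QT5
containing an element X with X * X = X. -/
theorem stmt_12 : ∃ (M : Type) (op : M → M → M) (a b : M),
    (∀ x y z, op (op x y) z = op x (op y z)) ∧
    (∀ x y, op x y ≠ a ∧ op x y ≠ b) ∧
    (∀ x y, (op x a = op y a → x = y) ∧ (op x b = op y b → x = y) ∧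
      (op a x = op a y → x = y) ∧ (op b x = op b y → x = y)) ∧
    (∀ x y, op a x ≠ op b y ∧ op x a ≠ op y b) ∧
    (∀ x, x = a ∨ x = b ∨
      ((∃ y, op a y = x ∨ op b y = x) ∧ (∃ z, op z a = x ∨ op z b = x))) ∧
    (∃ X, op X X = X) := by
  open QTModel in
  refine ⟨QTModel Bool, (· * ·), letter true, letter false, mul_assoc,
    fun x y => ⟨mul_ne_letter x y _, mul_ne_letter x y _⟩,
    fun x y => ?_, fun x y => ?_, fun x => ?_, ⟨gap (.const true) (.const true), rfl⟩⟩
  · simp [letter_mul_inj, mul_letter_inj]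
  · simp [letter_mul_inj, mul_letter_inj]
  · by_cases hx : ∀ c, x ≠ letter c
    · obtain ⟨c, y, rfl⟩ := exists_letter_mul_eq hx
      obtain ⟨z, d, hz⟩ := exists_mul_letter_eq hx
      right; right
      exact ⟨⟨y, by cases c <;> simp⟩, ⟨z, by cases d <;> simp [hz]⟩⟩
    · simp only [not_forall, not_not] at hx
      obtain ⟨c, rfl⟩ := hx
      cases c <;> simp
end

section
/- The first-order theory PS₀' with the empty-set constant 0 and adjunction as a ternary relation proves, from (PS2') functionality-in-the-third-argument and (PS3') commutation, the statement: membership defined by x ∈ y ≡ S(y, x, y) satisfies z ∈ x ∨ z = y → (for the unique w with S(x,y,w), z ∈ w). -/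
/-- in any structure satisfying PS1'–PS6', with membership defined
by x ∈ y ≡ S(y,x,y): if S(x,y,w) and (z ∈ x ∨ z = y) then z ∈ w. -/
theorem stmt_16 (M : Type*) (zero : M) (S : M → M → M → Prop)
    (ps1 : ∀ x, ¬ S zero x zero)
    (ps2 : ∀ x y z₁ z₂, S x y z₁ → S z₁ y z₂ → z₁ = z₂)
    (ps3 : ∀ x y z z₁ z₂ z₃ z₄,
      S x y z₁ → S z₁ z z₂ → S x z z₃ → S z₃ y z₄ → z₂ = z₄)
    (ps4 : ∀ x y z w, S x y z → S z w z → S x w x ∨ w = y)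
    (ps5 : ∀ x y, ∃ z, S x y z)
    (ps6 : ∀ x y z₁ z₂, S x y z₁ → S x y z₂ → z₁ = z₂)
    (mem : M → M → Prop) (hmem : ∀ x y, mem x y ↔ S y x y) :
    ∀ x y w z, S x y w → (mem z x ∨ z = y) → mem z w := by
  intro x y w z hxyw h
  rw [hmem]
  rcases h with h | rfl
  · rw [hmem] at h
    obtain ⟨v, hv⟩ := ps5 w z
    have := ps3 x y z w v x w hxyw hv h hxyw
    exact this ▸ hv
  · obtain ⟨v, hv⟩ := ps5 w z
    have := ps2 x z w v hxyw hv
    exact this ▸ hv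
end

section
/- In the standard model of nonempty binary strings with Quine's membership relation, the string aa codes the empty set: Set(aa) holds and no string y satisfies y ε aa; moreover any set code z with no members equals aa or has a member, and not both (i.e., Set(z) → ((z = aa ∨ ∃y y ε z) ∧ ¬(z = aa ∧ ∃y y ε z))). -/
def W : Type := {l : List Bool // l ≠ []}

/-- Concatenation of nonempty binary words. -/
def cat (x y : W) : W := ⟨x.1 ++ y.1, fun h => x.2 (List.append_eq_nil_iff.mp h).1⟩

/-- The one-letter word a. -/
def wa : W := ⟨[false], by simp⟩

/-- The one-letter word b. -/
def wb : W := ⟨[true], by simp⟩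

/-- x ⊆_p y : x is a (contiguous) substring of y. -/
def subp (x y : W) : Prop :=
  x = y ∨ (∃ z, cat x z = y) ∨ (∃ z, cat z x = y) ∨ ∃ y₁ y₂, y = cat y₁ (cat x y₂)

/-- x B y : x is a proper prefix of y. -/
def WB (x y : W) : Prop := ∃ z, cat x z = y

/-- x < y (on the standard model, where all words are tractable, this is R). -/
def Wlt (x y : W) : Prop := (x = wa ∧ y ≠ wa) ∨ WB x y

/-- Tally_b(t): every letter of t is b. -/
def TallyB (t : W) : Prop := ∀ l ∈ t.1, l = true

/-- MaxT_b(t, w): t is a b-tally and every b-tally occurring in w occurs in t. -/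
def MaxTB (t w : W) : Prop :=
  TallyB t ∧ ∀ t', TallyB t' → subp t' w → subp t' t

/-- Max⁺T_b(t, w): additionally t itself does not occur in w. -/
def MaxpTB (t w : W) : Prop := MaxTB t w ∧ ¬ subp t w

/-- Pref(u, t): u is a preframe indexed by t. -/
def Pref (u t : W) : Prop :=
  TallyB t ∧ ∃ y, subp y u ∧ cat wa (cat y wa) = u ∧ MaxpTB t u

/-- Firstf(x, t₁, u, t₂): t₁ u t₂ is the first frame in x. -/
def Firstf (x t₁ u t₂ : W) : Prop :=
  Pref u t₁ ∧ TallyB t₂ ∧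
    ((t₁ = t₂ ∧ cat t₁ (cat u t₂) = x) ∨
     (Wlt t₁ t₂ ∧ WB (cat t₁ (cat u (cat t₂ wa))) x))

/-- Lastf(x, t₁, u, t₂): t₁ u t₂ is the last frame in x. -/
def Lastf (x t₁ u t₂ : W) : Prop :=
  Pref u t₁ ∧ TallyB t₂ ∧ t₁ = t₂ ∧
    (cat t₁ (cat u t₂) = x ∨
     ∃ w, cat w (cat wa (cat t₁ (cat u t₂))) = x ∧ MaxpTB t₁ w)

/-- Intf(x, w, t₁, u, t₂): t₁ u t₂ is an intermediate frame in x immediately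
following the initial segment w of x. -/
def Intf (x w t₁ u t₂ : W) : Prop :=
  Pref u t₁ ∧ TallyB t₂ ∧ Wlt t₁ t₂ ∧
    (∃ w₁, cat w (cat wa (cat t₁ (cat u (cat t₂ (cat wa w₁))))) = x) ∧ MaxpTB t₁ w

/-- Fr(x, t₁, u, t₂): u is t₁, t₂-framed in x. -/
def Fr (x t₁ u t₂ : W) : Prop :=
  Firstf x t₁ u t₂ ∨ (∃ w, Intf x w t₁ u t₂) ∨ Lastf x t₁ u t₂

/-- Env(t, x): t envelops x, conditions (a)–(e). -/
def Env (t x : W) : Prop :=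
  MaxTB t x ∧
  (∃ u, subp u x ∧ ∃ t₁ t₂, Firstf x t₁ u t₂) ∧
  (∃ u, subp u x ∧ Lastf x t u t) ∧
  (∀ u, subp u x → ∀ t₁ t₂ t₃ t₄, Fr x t₁ u t₂ → Fr x t₃ u t₄ → t₁ = t₃) ∧
  (∀ u₁ u₂, subp u₁ x → subp u₂ x →
    ∀ t' t₁ t₂, Fr x t' u₁ t₁ → Fr x t' u₂ t₂ → u₁ = u₂)

/-- Set(x): x is a set code. -/
def SetC (x : W) : Prop := x = cat wa wa ∨ ∃ t, subp t x ∧ Env t x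

/-- y ε x : y is a member of the set coded by x. -/
def eps (y x : W) : Prop :=
  ∃ t, subp t x ∧ Env t x ∧
    ∃ u, subp u x ∧ ∃ t₁ t₂, Fr x t₁ u t₂ ∧ u = cat wa (cat y wa)

/-! Every word enveloped by some `t` ends in a frame `t u t` whose index `t` is a nonempty b-tally,
so it contains the letter b and cannot be `aa`; and that last frame is a preframe `u = a y a`,
which makes `y` a member. -/

lemma TallyB.true_mem {t : W} (ht : TallyB t) : true ∈ t.1 := by
  obtain ⟨l, hl⟩ := List.exists_mem_of_ne_nil t.1 t.2
  exact ht l hl ▸ hl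

lemma Lastf.true_mem {x t₁ u t₂ : W} (h : Lastf x t₁ u t₂) : true ∈ x.1 := by
  obtain ⟨⟨ht₁, -⟩, -, -, hx⟩ := h
  have hb := ht₁.true_mem
  rcases hx with rfl | ⟨w, rfl, -⟩ <;> simp [cat, hb]

lemma not_env_aa (t : W) : ¬ Env t (cat wa wa) := by
  rintro ⟨-, -, ⟨u, -, hLast⟩, -⟩
  simpa [cat, wa] using hLast.true_mem

lemma not_eps_aa (y : W) : ¬ eps y (cat wa wa) := by
  rintro ⟨t, -, hEnv, -⟩
  exact not_env_aa t hEnv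

lemma Env.exists_eps {t x : W} (ht : subp t x) (hEnv : Env t x) : ∃ y, eps y x := by
  obtain ⟨u, hu, hLast⟩ := hEnv.2.2.1
  obtain ⟨y, -, hy, -⟩ := hLast.1.2
  exact ⟨y, t, ht, hEnv, u, hu, t, t, Or.inr (Or.inr hLast), hy.symm⟩

/-- Null Set Lemma in the standard model: aa is a set code with
no members, and every set code z either equals aa or has a member, but not both. -/
theorem stmt_19 :
    SetC (cat wa wa) ∧ (∀ y, ¬ eps y (cat wa wa)) ∧
    (∀ z, SetC z → ((z = cat wa wa ∨ ∃ y, eps y z) ∧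
      ¬ (z = cat wa wa ∧ ∃ y, eps y z))) := by
  refine ⟨Or.inl rfl, not_eps_aa, fun z hz => ⟨?_, ?_⟩⟩
  · rcases hz with h | ⟨t, ht, hEnv⟩
    · exact Or.inl h
    · exact Or.inr (hEnv.exists_eps ht)
  · rintro ⟨rfl, y, hy⟩
    exact not_eps_aa y hy
end
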